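/- arXiv:2604.13642 — 4 statements merged into one kernel-verified Lean document; each statement's English description precedes it below -/
import Mathlib

section
/- Let U be a positive natural number, and let A and B be multisets whose elements lie in {1, 2, ..., U}. If |A| ≥ 2U and |B| ≥ 2U, then there exist non-empty sub-multisets A' ⊆ A and B' ⊆ B such that the sum of the elements of A' equals the sum of the elements of B'. -/
/-!
Order `A` and `B` as lists with `ΣA ≤ ΣB`, and write `S i`, `T j` for their prefix sums. Since
the entries of `B` are at most `U`, every `s ≤ ΣB` is followed by a prefix sum `T j(s)` with
`T j(s) - s < U`. The `U + 1` differences `T j(S i) - S i`, `0 ≤ i ≤ U`, thus take at most `U`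
values, so two of them agree, say for `i < i'`. Then the block of `A` between positions `i` and
`i'` and the block of `B` between `j(S i)` and `j(S i')` have the same, positive, sum.
-/

namespace List

lemma sum_take_eq_add_sum_drop_take {M : Type*} [AddMonoid M] (l : List M) {i k : ℕ}
    (hik : i ≤ k) : (l.take k).sum = (l.take i).sum + ((l.take k).drop i).sum := by
  rw [← sum_take_add_sum_drop (l.take k) i, take_take, min_eq_left hik]

lemma drop_take_isInfix {α : Type*} (l : List α) (i k : ℕ) : (l.take k).drop i <:+: l :=
  (drop_suffix i _).isInfix.trans (take_prefix k l).isInfix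

lemma sum_take_lt_sum_take {l : List ℕ} (hl : ∀ x ∈ l, 0 < x) {i k : ℕ} (hik : i < k)
    (hk : k ≤ l.length) : (l.take i).sum < (l.take k).sum := by
  have hblock : (l.take k).drop i ≠ [] := by
    rw [← length_pos_iff, length_drop, length_take]
    omega
  have hpos := sum_pos _ (fun x hx => hl x ((drop_take_isInfix l i k).subset hx)) hblock
  rw [sum_take_eq_add_sum_drop_take l hik.le]
  omega

lemma exists_sum_take_mem_Ico {l : List ℕ} {U : ℕ} (hU : 0 < U) (hl : ∀ x ∈ l, x ≤ U) {s : ℕ}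
    (hs : s ≤ l.sum) : ∃ j, s ≤ (l.take j).sum ∧ (l.take j).sum < s + U := by
  induction l generalizing s with
  | nil => exact ⟨0, by simpa using hs, by simp only [take_zero, sum_nil]; omega⟩
  | cons x l ih =>
    have hx : x ≤ U := hl x mem_cons_self
    rw [sum_cons] at hs
    rcases Nat.eq_zero_or_pos s with rfl | hs₀
    · exact ⟨0, by simp, by simpa using hU⟩
    by_cases hsx : s ≤ x
    · refine ⟨1, by simpa using hsx, ?_⟩
      simp only [take_succ_cons, take_zero, sum_cons, sum_nil]
      omega
    obtain ⟨j, hj⟩ := ih (fun y hy => hl y (mem_cons_of_mem x hy)) (s := s - x) (by omega)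
    exact ⟨j + 1, by simp only [take_succ_cons, sum_cons]; omega⟩

theorem exists_infix_sum_eq_of_sum_le {a b : List ℕ} {U : ℕ} (hU : 0 < U)
    (ha : ∀ x ∈ a, 0 < x) (hb : ∀ y ∈ b, y ≤ U) (hlen : U ≤ a.length) (hsum : a.sum ≤ b.sum) :
    ∃ a' b', a' <:+: a ∧ b' <:+: b ∧ 0 < a'.sum ∧ a'.sum = b'.sum := by
  have hS_le : ∀ i, (a.take i).sum ≤ b.sum := fun i =>
    (Nat.le.intro (sum_take_add_sum_drop a i)).trans hsum
  choose J hJ using fun i => exists_sum_take_mem_Ico hU hb (hS_le i)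
  obtain ⟨i, hi, i', hi', hne, hgap⟩ := Finset.exists_ne_map_eq_of_card_lt_of_maps_to
    (s := Finset.range (U + 1)) (t := Finset.range U)
    (f := fun i => (b.take (J i)).sum - (a.take i).sum) (by simp)
    (fun i _ => by have := hJ i; simp only [Finset.coe_range, Set.mem_Iio]; omega)
  simp only [Finset.mem_range] at hi hi' hgap
  wlog hii' : i < i' generalizing i i'
  · exact this i' i hne.symm hgap.symm hi' hi (by omega)
  have hJi := hJ i
  have hJi' := hJ i'
  have hS := sum_take_lt_sum_take ha hii' (by omega)
  have hJJ' : J i ≤ J i' := by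
    by_contra! h
    have : (b.take (J i')).sum ≤ (b.take (J i)).sum := monotone_sum_take b h.le
    omega
  have hsplit_a := sum_take_eq_add_sum_drop_take a hii'.le
  have hsplit_b := sum_take_eq_add_sum_drop_take b hJJ'
  exact ⟨(a.take i').drop i, (b.take (J i')).drop (J i), drop_take_isInfix _ _ _,
    drop_take_isInfix _ _ _, by omega, by omega⟩

end List

namespace Multiset

theorem exists_le_sum_eq_of_sum_le {A B : Multiset ℕ} {U : ℕ} (hU : 0 < U)
    (hA : ∀ a ∈ A, 0 < a) (hB : ∀ b ∈ B, b ≤ U) (hcard : U ≤ card A) (hsum : A.sum ≤ B.sum) :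
    ∃ A' B' : Multiset ℕ, A' ≠ 0 ∧ B' ≠ 0 ∧ A' ≤ A ∧ B' ≤ B ∧ A'.sum = B'.sum := by
  obtain ⟨a', b', ha', hb', hpos, hab⟩ := List.exists_infix_sum_eq_of_sum_le hU
    (fun x hx => hA x (mem_toList.1 hx)) (fun y hy => hB y (mem_toList.1 hy))
    (by rwa [length_toList]) (by rwa [sum_toList, sum_toList])
  refine ⟨a', b', ?_, ?_, ?_, ?_, by rw [sum_coe, sum_coe, hab]⟩
  · rw [Ne, coe_eq_zero]
    rintro rfl
    simp at hpos
  · rw [Ne, coe_eq_zero]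
    rintro rfl
    simp only [List.sum_nil] at hab
    omega
  · exact (coe_le.2 ha'.sublist.subperm).trans_eq (coe_toList A)
  · exact (coe_le.2 hb'.sublist.subperm).trans_eq (coe_toList B)

end Multiset

theorem equal_sum_submultisets (U : ℕ) (hU : 0 < U) (A B : Multiset ℕ)
    (hA : ∀ a ∈ A, 1 ≤ a ∧ a ≤ U) (hB : ∀ b ∈ B, 1 ≤ b ∧ b ≤ U)
    (hcardA : 2 * U ≤ Multiset.card A) (hcardB : 2 * U ≤ Multiset.card B) :
    ∃ A' B' : Multiset ℕ, A' ≠ 0 ∧ B' ≠ 0 ∧ A' ≤ A ∧ B' ≤ B ∧ A'.sum = B'.sum := by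
  rcases le_total A.sum B.sum with h | h
  · exact Multiset.exists_le_sum_eq_of_sum_le hU (fun a ha => (hA a ha).1)
      (fun b hb => (hB b hb).2) (by omega) h
  · obtain ⟨B', A', hB', hA', hB'B, hA'A, hsum⟩ := Multiset.exists_le_sum_eq_of_sum_le hU
      (fun b hb => (hB b hb).1) (fun a ha => (hA a ha).2) (by omega) h
    exact ⟨A', B', hA', hB', hA'A, hB'B, hsum.symm⟩
end

section
/- Let jobs have due dates d_1 ≤ d_2 ≤ ... ≤ d_n and let C, C' : {1,...,n} → ℝ be completion-time vectors. Fix j* and suppose there are disjoint sets J_H ⊆ {1,...,j*} and J_I ⊆ {j*+1,...,n} such that: C'_j ≤ C_j for all j ∈ J_H; C'_j ≤ C_{j*} for all j ∈ J_I; and C'_j = C_j for all j ∉ J_H ∪ J_I. Then max_j (C'_j − d_j) ≤ max_j (C_j − d_j). -/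
theorem Finset.sup'_le_sup'_of_forall_exists_le {α β : Type*} [SemilatticeSup α]
    {s t : Finset β} (hs : s.Nonempty) (ht : t.Nonempty) {f g : β → α}
    (h : ∀ j ∈ s, ∃ k ∈ t, f j ≤ g k) : s.sup' hs f ≤ t.sup' ht g :=
  Finset.sup'_le hs f fun j hj =>
    let ⟨_, hk, hle⟩ := h j hj
    Finset.le_sup'_of_le g hk hle

section Swap

variable {ι α : Type*} [Preorder ι] [AddCommGroup α] [PartialOrder α] [IsOrderedAddMonoid α]
  {d C C' : ι → α} {jstar : ι} {JH JI : Set ι}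

theorem exists_lateness_le_of_swap (hd : Monotone d) (hIgt : ∀ j ∈ JI, jstar < j)
    (hH : ∀ j ∈ JH, C' j ≤ C j) (hI : ∀ j ∈ JI, C' j ≤ C jstar)
    (hrest : ∀ j, j ∉ JH → j ∉ JI → C' j = C j) (j : ι) :
    ∃ k, C' j - d j ≤ C k - d k := by
  by_cases hjI : j ∈ JI
  · exact ⟨jstar, sub_le_sub (hI j hjI) (hd (hIgt j hjI).le)⟩
  by_cases hjH : j ∈ JH
  · exact ⟨j, sub_le_sub_right (hH j hjH) _⟩
  · exact ⟨j, by rw [hrest j hjH hjI]⟩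

end Swap

theorem swap_not_increase_Lmax_general (n : ℕ) (hn : 0 < n) (d C C' : Fin n → ℝ)
    (hd : ∀ i j : Fin n, i ≤ j → d i ≤ d j) (jstar : Fin n)
    (JH JI : Finset (Fin n))
    (hIgt : ∀ j ∈ JI, jstar < j)
    (hH : ∀ j ∈ JH, C' j ≤ C j) (hI : ∀ j ∈ JI, C' j ≤ C jstar)
    (hrest : ∀ j, j ∉ JH → j ∉ JI → C' j = C j) :
    Finset.univ.sup' ⟨⟨0, hn⟩, Finset.mem_univ _⟩ (fun j => C' j - d j) ≤
      Finset.univ.sup' ⟨⟨0, hn⟩, Finset.mem_univ _⟩ (fun j => C j - d j) := by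
  refine Finset.sup'_le_sup'_of_forall_exists_le _ _ fun j _ => ?_
  obtain ⟨k, hk⟩ := exists_lateness_le_of_swap (fun i j => hd i j) hIgt hH hI hrest j
  exact ⟨k, Finset.mem_univ k, hk⟩

theorem swap_not_increase_Lmax (n : ℕ) (hn : 0 < n) (d C C' : Fin n → ℝ)
    (hd : ∀ i j : Fin n, i ≤ j → d i ≤ d j) (jstar : Fin n)
    (JH JI : Finset (Fin n)) (hdisj : Disjoint JH JI)
    (hHle : ∀ j ∈ JH, j ≤ jstar) (hIgt : ∀ j ∈ JI, jstar < j)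
    (hH : ∀ j ∈ JH, C' j ≤ C j) (hI : ∀ j ∈ JI, C' j ≤ C jstar)
    (hrest : ∀ j, j ∉ JH → j ∉ JI → C' j = C j) :
    Finset.univ.sup' ⟨⟨0, hn⟩, Finset.mem_univ _⟩ (fun j => C' j - d j) ≤
      Finset.univ.sup' ⟨⟨0, hn⟩, Finset.mem_univ _⟩ (fun j => C j - d j) :=
  swap_not_increase_Lmax_general n hn d C C' hd jstar JH JI hIgt hH hI hrest
end

section
/- Let U be a positive natural number and let A, B be finite multisets of elements of {1, ..., U} with |A| = |B| = 2U. For the greedily constructed nested index sets A_i, B_i (adding index i to the side with currently smaller sum, ties going to A), there exist 0 ≤ i < j ≤ 2U such that the sub-multisets A_j \ A_i of A and B_j \ B_i of B are both non-empty and have equal sums. -/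
/-!
Let `d_i` be the sum of `A_i` minus the sum of `B_i`. The greedy rule keeps `-U < d_i ≤ U`:
an element of `A` (at most `U`) is only added when `d_i ≤ 0`, and one of `B` only when
`d_i > 0`. So the `2U + 1` values `d_0, …, d_{2U}` lie in a set of `2U` integers and two of
them agree, `d_i = d_j` with `i < j`; this says exactly that `A_j \ A_i` and `B_j \ B_i` have
equal sums. Since `j - i` indices were distributed between the two differences, one of them is
nonempty, and as all elements are positive, so is the other.
-/

/-- The greedy construction of nested index sets for the enumerated multisets
`a` and `b`: at step `i+1`, index `i+1` is added to the `A`-side if the current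
`A`-sum is at most the current `B`-sum (ties going to `A`), and to the `B`-side
otherwise. `(greedySets a b i).1` is the index set `A_i`, and
`(greedySets a b i).2` is the index set `B_i`. -/
def greedySets (a b : ℕ → ℕ) : ℕ → Finset ℕ × Finset ℕ
  | 0 => (∅, ∅)
  | i + 1 =>
    let P := greedySets a b i
    if P.1.sum a ≤ P.2.sum b then (insert (i + 1) P.1, P.2)
    else (P.1, insert (i + 1) P.2)

open Finset

lemma greedySets_succ (a b : ℕ → ℕ) (i : ℕ) :
    greedySets a b (i + 1) =
      if (greedySets a b i).1.sum a ≤ (greedySets a b i).2.sum b then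
        (insert (i + 1) (greedySets a b i).1, (greedySets a b i).2)
      else ((greedySets a b i).1, insert (i + 1) (greedySets a b i).2) := rfl

lemma greedySets_subset_Icc (a b : ℕ → ℕ) (i : ℕ) :
    (greedySets a b i).1 ⊆ Icc 1 i ∧ (greedySets a b i).2 ⊆ Icc 1 i := by
  induction i with
  | zero => simp [greedySets]
  | succ i ih =>
    have hle : Icc 1 i ⊆ Icc 1 (i + 1) := Icc_subset_Icc_right (Nat.le_succ i)
    have hmem : i + 1 ∈ Icc 1 (i + 1) := by simp
    rw [greedySets_succ]
    split_ifs
    · exact ⟨insert_subset hmem (ih.1.trans hle), ih.2.trans hle⟩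
    · exact ⟨ih.1.trans hle, insert_subset hmem (ih.2.trans hle)⟩

lemma succ_notMem_greedySets (a b : ℕ → ℕ) (i : ℕ) :
    i + 1 ∉ (greedySets a b i).1 ∧ i + 1 ∉ (greedySets a b i).2 := by
  have hout : i + 1 ∉ Icc 1 i := by simp
  exact ⟨fun h => hout ((greedySets_subset_Icc a b i).1 h),
    fun h => hout ((greedySets_subset_Icc a b i).2 h)⟩

lemma monotone_greedySets (a b : ℕ → ℕ) : Monotone (greedySets a b) := by
  refine monotone_nat_of_le_succ fun i => ?_
  rw [greedySets_succ, Prod.le_def]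
  split_ifs
  · exact ⟨subset_insert _ _, subset_rfl⟩
  · exact ⟨subset_rfl, subset_insert _ _⟩

lemma card_greedySets (a b : ℕ → ℕ) (i : ℕ) :
    (greedySets a b i).1.card + (greedySets a b i).2.card = i := by
  induction i with
  | zero => simp [greedySets]
  | succ i ih =>
    obtain ⟨hA, hB⟩ := succ_notMem_greedySets a b i
    rw [greedySets_succ]
    split_ifs
    · rw [card_insert_of_notMem hA, add_right_comm, ih]
    · rw [card_insert_of_notMem hB, ← add_assoc, ih]

lemma greedySets_sdiff_nonempty {a b : ℕ → ℕ} {i j : ℕ} (hij : i < j) :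
    ((greedySets a b j).1 \ (greedySets a b i).1).Nonempty ∨
      ((greedySets a b j).2 \ (greedySets a b i).2).Nonempty := by
  obtain ⟨hA, hB⟩ := monotone_greedySets a b hij.le
  have hcard_i := card_greedySets a b i
  have hcard_j := card_greedySets a b j
  have hA_le := card_le_card hA
  have hB_le := card_le_card hB
  rw [← card_pos, ← card_pos, card_sdiff_of_subset hA, card_sdiff_of_subset hB]
  omega

def greedyGap (a b : ℕ → ℕ) (i : ℕ) : ℤ :=
  (((greedySets a b i).1.sum a : ℕ) : ℤ) - (((greedySets a b i).2.sum b : ℕ) : ℤ)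

lemma greedyGap_succ (a b : ℕ → ℕ) (i : ℕ) :
    greedyGap a b (i + 1) =
      if greedyGap a b i ≤ 0 then greedyGap a b i + a (i + 1)
      else greedyGap a b i - b (i + 1) := by
  obtain ⟨hA, hB⟩ := succ_notMem_greedySets a b i
  unfold greedyGap
  rw [greedySets_succ]
  split_ifs with h h' h'
  · rw [sum_insert hA]; push_cast; ring
  · omega
  · omega
  · rw [sum_insert hB]; push_cast; ring

lemma greedyGap_mem_Ioc {a b : ℕ → ℕ} {U n : ℕ} (hU : 0 < U)
    (ha : ∀ k, 1 ≤ k → k ≤ n → a k ≤ U) (hb : ∀ k, 1 ≤ k → k ≤ n → b k ≤ U) :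
    ∀ i ≤ n, greedyGap a b i ∈ Ioc (-(U : ℤ)) U := by
  intro i
  induction i with
  | zero => simp [greedyGap, greedySets, hU]
  | succ i ih =>
    intro hi
    have hprev := mem_Ioc.mp (ih (by omega))
    have ha' := ha (i + 1) (by omega) hi
    have hb' := hb (i + 1) (by omega) hi
    rw [greedyGap_succ, mem_Ioc]
    split_ifs <;> omega

lemma exists_lt_greedyGap_eq {a b : ℕ → ℕ} {U : ℕ} (hU : 0 < U)
    (ha : ∀ k, 1 ≤ k → k ≤ 2 * U → a k ≤ U) (hb : ∀ k, 1 ≤ k → k ≤ 2 * U → b k ≤ U) :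
    ∃ i j, i < j ∧ j ≤ 2 * U ∧ greedyGap a b i = greedyGap a b j := by
  have hcard : (Ioc (-(U : ℤ)) U).card < (range (2 * U + 1)).card := by
    rw [Int.card_Ioc, card_range]
    omega
  obtain ⟨i, hi, j, hj, hne, hgap⟩ := exists_ne_map_eq_of_card_lt_of_maps_to hcard
    fun i hi => greedyGap_mem_Ioc hU ha hb i (Nat.lt_succ_iff.mp (mem_range.mp hi))
  rw [mem_range, Nat.lt_succ_iff] at hi hj
  rcases hne.lt_or_gt with hij | hji
  · exact ⟨i, j, hij, hj, hgap⟩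
  · exact ⟨j, i, hji, hi, hgap.symm⟩

lemma sum_greedySets_sdiff_eq {a b : ℕ → ℕ} {i j : ℕ} (hij : i ≤ j)
    (hgap : greedyGap a b i = greedyGap a b j) :
    ((greedySets a b j).1 \ (greedySets a b i).1).sum a =
      ((greedySets a b j).2 \ (greedySets a b i).2).sum b := by
  obtain ⟨hA, hB⟩ := monotone_greedySets a b hij
  have hsumA : ((greedySets a b j).1 \ (greedySets a b i).1).sum a + (greedySets a b i).1.sum a =
      (greedySets a b j).1.sum a := sum_sdiff hA
  have hsumB : ((greedySets a b j).2 \ (greedySets a b i).2).sum b + (greedySets a b i).2.sum b =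
      (greedySets a b j).2.sum b := sum_sdiff hB
  unfold greedyGap at hgap
  omega

lemma nonempty_and_nonempty_of_sum_eq {ι : Type*} {s t : Finset ι} {f g : ι → ℕ}
    (hf : ∀ x ∈ s, 0 < f x) (hg : ∀ x ∈ t, 0 < g x) (hsum : s.sum f = t.sum g)
    (hst : s.Nonempty ∨ t.Nonempty) : s.Nonempty ∧ t.Nonempty := by
  have hs : s.Nonempty ↔ 0 < s.sum f :=
    ⟨sum_pos hf, fun h => nonempty_of_sum_ne_zero h.ne'⟩
  have ht : t.Nonempty ↔ 0 < t.sum g :=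
    ⟨sum_pos hg, fun h => nonempty_of_sum_ne_zero h.ne'⟩
  rw [hs, ht, hsum] at hst ⊢
  exact ⟨hst.elim id id, hst.elim id id⟩

theorem greedy_equal_sum_differences (U : ℕ) (hU : 0 < U) (a b : ℕ → ℕ)
    (ha : ∀ k, 1 ≤ k → k ≤ 2 * U → 1 ≤ a k ∧ a k ≤ U)
    (hb : ∀ k, 1 ≤ k → k ≤ 2 * U → 1 ≤ b k ∧ b k ≤ U) :
    ∃ i j : ℕ, i < j ∧ j ≤ 2 * U ∧
      ((greedySets a b j).1 \ (greedySets a b i).1).Nonempty ∧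
      ((greedySets a b j).2 \ (greedySets a b i).2).Nonempty ∧
      ((greedySets a b j).1 \ (greedySets a b i).1).sum a =
        ((greedySets a b j).2 \ (greedySets a b i).2).sum b := by
  obtain ⟨i, j, hij, hj, hgap⟩ := exists_lt_greedyGap_eq hU
    (fun k hk hkU => (ha k hk hkU).2) (fun k hk hkU => (hb k hk hkU).2)
  have hsum := sum_greedySets_sdiff_eq hij.le hgap
  have hpos : ∀ k ∈ Icc 1 j, 0 < a k ∧ 0 < b k := fun k hk => by
    obtain ⟨hk1, hkj⟩ := mem_Icc.mp hk
    exact ⟨(ha k hk1 (hkj.trans hj)).1, (hb k hk1 (hkj.trans hj)).1⟩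
  obtain ⟨hA, hB⟩ := greedySets_subset_Icc a b j
  obtain ⟨hneA, hneB⟩ := nonempty_and_nonempty_of_sum_eq
    (fun k hk => (hpos k (hA (mem_sdiff.mp hk).1)).1)
    (fun k hk => (hpos k (hB (mem_sdiff.mp hk).1)).2) hsum (greedySets_sdiff_nonempty hij)
  exact ⟨i, j, hij, hj, hneA, hneB, hsum⟩
end

section
/- Let J = {1,...,n} with positive processing times p_j, and let σ be a proper schedule on m machines in which machine M_h has strictly maximal load and M_i has strictly minimal load with P(J_h(σ)) − P(J_i(σ)) > p_max, where p_max = max_j p_j. Let j be the last job processed on M_h, and let σ̂ be the schedule obtained by moving j to the end of M_i (then re-sorting M_i by index). Then the completion time of job j in σ̂ is at most its completion time in σ, and the completion time of every other job does not increase. Consequently, for any regular objective f, f(σ̂) ≤ f(σ). -/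
/-- Completion time of job `j` in the proper schedule given by the machine
assignment `σ`. -/
def completion {n m : ℕ} (p : Fin n → ℕ) (σ : Fin n → Fin m) (j : Fin n) : ℕ :=
  ∑ j' ∈ Finset.univ.filter (fun j' => σ j' = σ j ∧ j' ≤ j), p j'

/-- Total load of machine `i` under assignment `σ`. -/
def load {n m : ℕ} (p : Fin n → ℕ) (σ : Fin n → Fin m) (i : Fin m) : ℕ :=
  ∑ j ∈ Finset.univ.filter (fun j => σ j = i), p j

/-! The last job on a machine completes exactly when the machine's load is processed, so moving
it to the end of a machine whose load is smaller by more than `p_max` can only make it finish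
earlier; every other completion time is left unchanged. -/

theorem completion_eq_load_of_forall_le {n m : ℕ} (p : Fin n → ℕ) (σ : Fin n → Fin m)
    {j : Fin n} (hlast : ∀ j' : Fin n, σ j' = σ j → j' ≤ j) :
    completion p σ j = load p σ (σ j) := by
  unfold completion load
  congr 1
  ext j'
  simpa using hlast j'

theorem move_last_job_not_worse_general (n m : ℕ) (p : Fin n → ℕ)
    (σ : Fin n → Fin m) (h i : Fin m)
    (hgap : ((Finset.univ.sup p : ℕ) : ℤ) < (load p σ h : ℤ) - (load p σ i : ℤ))
    (j : Fin n) (hj : σ j = h) (hlast : ∀ j' : Fin n, σ j' = h → j' ≤ j) :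
    (∀ j' : Fin n,
        Function.update (completion p σ) j (load p σ i + p j) j' ≤
          completion p σ j') ∧
    (∀ f : (Fin n → ℕ) → ℝ,
        (∀ C C' : Fin n → ℕ, (∀ j', C j' ≤ C' j') → f C ≤ f C') →
        f (Function.update (completion p σ) j (load p σ i + p j)) ≤
          f (completion p σ)) := by
  have hcj : completion p σ j = load p σ h :=
    hj ▸ completion_eq_load_of_forall_le p σ (hj ▸ hlast)
  have hpj : p j ≤ Finset.univ.sup p := Finset.le_sup (Finset.mem_univ j)
  have hmoved : load p σ i + p j ≤ completion p σ j := by omega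
  have hle : Function.update (completion p σ) j (load p σ i + p j) ≤ completion p σ :=
    update_le_self_iff.2 hmoved
  exact ⟨hle, fun f hf => hf _ _ hle⟩

theorem move_last_job_not_worse (n m : ℕ) (p : Fin n → ℕ) (hp : ∀ j, 0 < p j)
    (σ : Fin n → Fin m) (h i : Fin m)
    (hmax : ∀ a : Fin m, a ≠ h → load p σ a < load p σ h)
    (hmin : ∀ a : Fin m, a ≠ i → load p σ i < load p σ a)
    (hgap : ((Finset.univ.sup p : ℕ) : ℤ) < (load p σ h : ℤ) - (load p σ i : ℤ))
    (j : Fin n) (hj : σ j = h) (hlast : ∀ j' : Fin n, σ j' = h → j' ≤ j) :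
    (∀ j' : Fin n,
        Function.update (completion p σ) j (load p σ i + p j) j' ≤
          completion p σ j') ∧
    (∀ f : (Fin n → ℕ) → ℝ,
        (∀ C C' : Fin n → ℕ, (∀ j', C j' ≤ C' j') → f C ≤ f C') →
        f (Function.update (completion p σ) j (load p σ i + p j)) ≤
          f (completion p σ)) :=
  move_last_job_not_worse_general n m p σ h i hgap j hj hlast
end
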